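/- With the notation above, for any x, y ∈ ℝ^N with d(x,y) < ‖x − y‖ there exist m with 1 ≤ m ≤ |G| and roots α₁, …, α_m ∈ R such that the sequence of distances strictly decreases: ‖x − y‖ > ‖x − σ_{α₁}(y)‖ > ‖x − σ_{α₂}∘σ_{α₁}(y)‖ > ⋯ > ‖x − σ_{α_m}∘⋯∘σ_{α₁}(y)‖, and the final point satisfies ‖x − σ_{α_m}∘⋯∘σ_{α₁}(y)‖ = d(x,y). -/

import Mathlib

open scoped RealInnerProductSpace
noncomputable section

/-- `ℝ^N` with the Euclidean structure. -/
abbrev Euc (N : ℕ) := EuclideanSpace ℝ (Fin N)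

/-- The reflection `σ_α` in the hyperplane orthogonal to `α`. -/
def sigmaRefl {N : ℕ} (α : Euc N) : Euc N ≃ₗᵢ[ℝ] Euc N :=
  Submodule.reflection (ℝ ∙ α)ᗮ

/-- The orbit distance `d(x,y) = min_{σ ∈ G} ‖x − σ(y)‖`. -/
def orbDist {N : ℕ} (G : Subgroup (Euc N ≃ₗᵢ[ℝ] Euc N)) (x y : Euc N) : ℝ :=
  ⨅ σ : G, ‖x - (σ : Euc N ≃ₗᵢ[ℝ] Euc N) y‖

/-- The hypotheses defining a normalized root system. -/
structure IsNormalizedRootSystem {N : ℕ} (R : Finset (Euc N)) : Prop where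
  ne_zero : (0 : Euc N) ∉ R
  neg_mem : ∀ α ∈ R, -α ∈ R
  smul_mem : ∀ α ∈ R, ∀ c : ℝ, c • α ∈ R → c • α = α ∨ c • α = -α
  refl_mem : ∀ α ∈ R, ∀ β ∈ R, sigmaRefl α β ∈ R
  norm_eq : ∀ α ∈ R, ‖α‖ = Real.sqrt 2

/-- The Coxeter (reflection) group generated by the reflections `σ_α`, `α ∈ R`. -/
def coxeterGroup {N : ℕ} (R : Finset (Euc N)) : Subgroup (Euc N ≃ₗᵢ[ℝ] Euc N) :=
  Subgroup.closure ((fun α => sigmaRefl α) '' (R : Set (Euc N)))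

/-- The iterated reflection points. -/
def chainPt {N : ℕ} (a : ℕ → Euc N) (y : Euc N) : ℕ → Euc N
  | 0 => y
  | j + 1 => sigmaRefl (a j) (chainPt a y j)


/-!
A reflection `σ_α` moves `y` closer to `x` exactly when the root `α` strictly separates them,
since `‖x - σ_α y‖² = ‖x - y‖² + 2 ⟪α, x⟫ ⟪α, y⟫`. The substance is the converse: if no root
separates `x` and `y`, then `y` is a closest point of its orbit to `x`. To see this, perturb
`x + y` to a vector `v` orthogonal to no root; then `x` and `y` are dominant for the positive
roots `R⁺ = {α | 0 < ⟪v, α⟫}`. A simple system `Δ ⊆ R⁺` (a conically independent set spanning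
the cone of `R⁺`) has the usual properties: `σ_α` permutes `R⁺ \ {α}` for `α ∈ Δ`, the simple
reflections generate `G`, and words in them satisfy the exchange condition. Induction on the
length of a word `w` then gives `⟪x, w y⟫ ≤ ⟪x, y⟫`.

The chain is obtained by iterating the one-reflection step. Each step strictly lowers the number
of `σ ∈ G` with `σ y` closer to `x` than the current point, so there are at most `|G|` steps.
-/

variable {N : ℕ}

lemma sigmaRefl_apply {α : Euc N} (hα : ‖α‖ = √2) (v : Euc N) :
    sigmaRefl α v = v - ⟪α, v⟫ • α := by
  rw [sigmaRefl, Submodule.reflection_orthogonal_apply, Submodule.reflection_singleton_apply,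
    hα, RCLike.ofReal_real_eq_id, id, Real.sq_sqrt zero_le_two, two_smul, ← add_smul,
    add_halves, neg_sub]

@[simp]
lemma sigmaRefl_sigmaRefl (α v : Euc N) : sigmaRefl α (sigmaRefl α v) = v :=
  Submodule.reflection_reflection _ v

@[simp]
lemma sigmaRefl_inv (α : Euc N) : (sigmaRefl α)⁻¹ = sigmaRefl α :=
  Submodule.reflection_inv

@[simp]
lemma sigmaRefl_mul_self (α : Euc N) : sigmaRefl α * sigmaRefl α = 1 :=
  Submodule.reflection_mul_reflection _

lemma sigmaRefl_neg (α : Euc N) : sigmaRefl (-α) = sigmaRefl α := by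
  simp_rw [sigmaRefl, ← Set.neg_singleton, Submodule.span_neg]

lemma sigmaRefl_map {α : Euc N} (hα : ‖α‖ = √2) (u : Euc N ≃ₗᵢ[ℝ] Euc N) :
    sigmaRefl (u α) = u * sigmaRefl α * u⁻¹ := by
  ext1 v
  rw [sigmaRefl_apply (by rwa [u.norm_map]), u.inner_map_eq_flip]
  simp [sigmaRefl_apply hα]

lemma norm_sub_sigmaRefl_sq {α : Euc N} (hα : ‖α‖ = √2) (x y : Euc N) :
    ‖x - sigmaRefl α y‖ ^ 2 = ‖x - y‖ ^ 2 + 2 * (⟪α, x⟫ * ⟪α, y⟫) := by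
  rw [sigmaRefl_apply hα, sub_sub_eq_add_sub, add_sub_right_comm, norm_add_sq_real, norm_smul,
    hα, inner_smul_right, real_inner_comm x, inner_sub_left, real_inner_comm y, mul_pow,
    Real.sq_sqrt zero_le_two, Real.norm_eq_abs, sq_abs]
  ring

lemma norm_sub_sigmaRefl_lt_iff {α : Euc N} (hα : ‖α‖ = √2) (x y : Euc N) :
    ‖x - sigmaRefl α y‖ < ‖x - y‖ ↔ ⟪α, x⟫ * ⟪α, y⟫ < 0 := by
  rw [← sq_lt_sq₀ (norm_nonneg _) (norm_nonneg _), norm_sub_sigmaRefl_sq hα]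
  constructor <;> intro h <;> linarith

lemma sigmaRefl_mem_coxeterGroup {R : Finset (Euc N)} {α : Euc N} (hα : α ∈ R) :
    sigmaRefl α ∈ coxeterGroup R :=
  Subgroup.subset_closure ⟨α, hα, rfl⟩

lemma IsNormalizedRootSystem.apply_mem_iff {R : Finset (Euc N)} (hR : IsNormalizedRootSystem R)
    {w : Euc N ≃ₗᵢ[ℝ] Euc N} (hw : w ∈ coxeterGroup R) (β : Euc N) : w β ∈ R ↔ β ∈ R := by
  induction hw using Subgroup.closure_induction generalizing β with
  | mem _ hσ =>
    obtain ⟨α, hα, rfl⟩ := hσ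
    exact ⟨fun h => by simpa using hR.refl_mem α hα _ h, hR.refl_mem α hα β⟩
  | one => rfl
  | mul u w _ _ hu hw => exact (hu (w β)).trans (hw β)
  | inv w _ hw => simpa using (hw (w⁻¹ β)).symm

lemma orbDist_le {G : Subgroup (Euc N ≃ₗᵢ[ℝ] Euc N)} {σ : Euc N ≃ₗᵢ[ℝ] Euc N} (hσ : σ ∈ G)
    (x y : Euc N) : orbDist G x y ≤ ‖x - σ y‖ :=
  ciInf_le ⟨0, by rintro _ ⟨τ, rfl⟩; exact norm_nonneg _⟩ (⟨σ, hσ⟩ : G)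

lemma exists_mem_norm_sub_eq_orbDist (G : Subgroup (Euc N ≃ₗᵢ[ℝ] Euc N)) [Finite G]
    (x y : Euc N) : ∃ σ ∈ G, ‖x - σ y‖ = orbDist G x y := by
  obtain ⟨σ, hσ⟩ :=
    exists_eq_ciInf_of_finite (f := fun σ : G => ‖x - (σ : Euc N ≃ₗᵢ[ℝ] Euc N) y‖)
  exact ⟨σ, σ.2, hσ⟩

section InnerProductSpace

variable {E : Type*} [NormedAddCommGroup E] [InnerProductSpace ℝ E] {s : Set E} {v u : E}

lemma inner_nonneg_of_mem_hull (hs : ∀ γ ∈ s, 0 ≤ ⟪v, γ⟫) (hu : u ∈ PointedCone.hull ℝ s) :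
    0 ≤ ⟪v, u⟫ := by
  induction hu using Submodule.span_induction with
  | mem γ hγ => exact hs γ hγ
  | zero => simp
  | add u w _ _ hu hw => rw [inner_add_right]; positivity
  | smul a u _ hu => rw [← Nonneg.coe_smul, inner_smul_right]; exact mul_nonneg a.2 hu

lemma exists_inner_pos_of_mem_hull (hu : u ∈ PointedCone.hull ℝ s) (h : 0 < ⟪v, u⟫) :
    ∃ γ ∈ s, 0 < ⟪v, γ⟫ := by
  by_contra! hs
  have := inner_nonneg_of_mem_hull (v := -v) (fun γ hγ => by simpa using hs γ hγ) hu
  rw [inner_neg_left] at this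
  linarith

lemma eq_zero_of_mem_hull_of_inner_eq_zero (hs : ∀ γ ∈ s, 0 < ⟪v, γ⟫)
    (hu : u ∈ PointedCone.hull ℝ s) (h : ⟪v, u⟫ = 0) : u = 0 := by
  induction hu using Submodule.span_induction with
  | mem γ hγ => exact absurd h (hs γ hγ).ne'
  | zero => rfl
  | add u w hu hw ihu ihw =>
    have hu0 := inner_nonneg_of_mem_hull (fun γ hγ => (hs γ hγ).le) hu
    have hw0 := inner_nonneg_of_mem_hull (fun γ hγ => (hs γ hγ).le) hw
    rw [inner_add_right] at h
    rw [ihu (by linarith), ihw (by linarith), add_zero]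
  | smul a u _ ihu =>
    rw [← Nonneg.coe_smul, inner_smul_right, mul_eq_zero] at h
    rcases h with h | h
    · rw [← Nonneg.coe_smul, h, zero_smul]
    · rw [ihu h, smul_zero]

lemma exists_eq_smul_add_of_mem_hull {α : E} (hα : α ∈ s) (hu : u ∈ PointedCone.hull ℝ s) :
    ∃ a : ℝ, ∃ k ∈ PointedCone.hull ℝ (s \ {α}), u = a • α + k := by
  rw [← Set.insert_eq_of_mem hα, ← Set.insert_sdiff_singleton, Submodule.mem_span_insert] at hu
  obtain ⟨a, k, hk, rfl⟩ := hu
  exact ⟨a, k, hk, by rw [Nonneg.coe_smul]⟩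

lemma exists_forall_inner_ne_zero (S : Finset E) (hS : (0 : E) ∉ S) :
    ∃ ξ : E, ∀ α ∈ S, ⟪α, ξ⟫ ≠ 0 := by
  obtain ⟨ξ, -, hξ⟩ := Set.exists_of_ssubset
    (Submodule.iUnion_ssubset_of_forall_ne_top_of_card_lt S.attach (fun α => (ℝ ∙ (α : E))ᗮ)
      (fun α => by
        rw [Ne, Submodule.orthogonal_eq_top_iff, Submodule.span_singleton_eq_bot]
        exact ne_of_mem_of_not_mem α.2 hS)
      (by simp [ENat.card_eq_top_of_infinite]))
  refine ⟨ξ, fun α hα h => hξ (Set.mem_biUnion (Finset.mem_attach _ ⟨α, hα⟩) ?_)⟩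
  exact Submodule.mem_orthogonal_singleton_iff_inner_right.2 h

open Filter Topology in
lemma exists_forall_inner_ne_zero_and_nonneg (S : Finset E) (hS : (0 : E) ∉ S) (u : E) :
    ∃ v : E, ∀ α ∈ S, ⟪v, α⟫ ≠ 0 ∧ (0 < ⟪v, α⟫ → 0 ≤ ⟪u, α⟫) := by
  obtain ⟨ξ, hξ⟩ := exists_forall_inner_ne_zero S hS
  have : ∀ᶠ t in 𝓝[≠] (0 : ℝ), ∀ α ∈ S,
      ⟪u + t • ξ, α⟫ ≠ 0 ∧ (0 < ⟪u + t • ξ, α⟫ → 0 ≤ ⟪u, α⟫) := by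
    rw [eventually_all_finset]
    intro α hα
    have hcont : Continuous fun t : ℝ => ⟪u + t • ξ, α⟫ := by fun_prop
    have hlim : Tendsto (fun t : ℝ => ⟪u + t • ξ, α⟫) (𝓝[≠] 0) (𝓝 ⟪u, α⟫) := by
      simpa using tendsto_nhdsWithin_of_tendsto_nhds (hcont.tendsto 0)
    rcases lt_trichotomy ⟪u, α⟫ 0 with h | h | h
    · filter_upwards [hlim.eventually (gt_mem_nhds h)] with t ht
      exact ⟨ht.ne, fun h' => absurd h' (not_lt.2 ht.le)⟩
    · filter_upwards [self_mem_nhdsWithin] with t ht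
      rw [inner_add_left, h, zero_add, real_inner_smul_left, real_inner_comm]
      exact ⟨mul_ne_zero ht (hξ α hα), fun _ => le_rfl⟩
    · filter_upwards [hlim.eventually (lt_mem_nhds h)] with t ht
      exact ⟨ht.ne', fun _ => h.le⟩
  obtain ⟨t, ht⟩ := this.exists
  exact ⟨u + t • ξ, ht⟩

end InnerProductSpace

def reflProd (l : List (Euc N)) : Euc N ≃ₗᵢ[ℝ] Euc N :=
  (l.map sigmaRefl).prod

@[simp]
lemma reflProd_nil : reflProd ([] : List (Euc N)) = 1 := rfl

@[simp]
lemma reflProd_cons (γ : Euc N) (l : List (Euc N)) :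
    reflProd (γ :: l) = sigmaRefl γ * reflProd l := List.prod_cons

@[simp]
lemma reflProd_singleton (γ : Euc N) : reflProd [γ] = sigmaRefl γ := by
  simp [reflProd]

@[simp]
lemma reflProd_append (l₁ l₂ : List (Euc N)) :
    reflProd (l₁ ++ l₂) = reflProd l₁ * reflProd l₂ := by
  simp [reflProd]

lemma reflProd_reverse (l : List (Euc N)) : reflProd l.reverse = (reflProd l)⁻¹ := by
  simp [reflProd, List.prod_inv_reverse, List.map_reverse, Function.comp_def]

lemma reflProd_mem_coxeterGroup {R : Finset (Euc N)} {l : List (Euc N)} (hl : ∀ γ ∈ l, γ ∈ R) :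
    reflProd l ∈ coxeterGroup R :=
  (coxeterGroup R).list_prod_mem (by simpa using fun γ hγ => sigmaRefl_mem_coxeterGroup (hl γ hγ))

def posRoots (R : Finset (Euc N)) (v : Euc N) : Finset (Euc N) :=
  R.filter fun α => 0 < ⟪v, α⟫

structure IsSimpleSystem (R : Finset (Euc N)) (v : Euc N) (Δ : Finset (Euc N)) : Prop where
  subset_posRoots : Δ ⊆ posRoots R v
  posRoots_subset_hull : ∀ β ∈ posRoots R v, β ∈ PointedCone.hull ℝ (Δ : Set (Euc N))
  notMem_hull_diff : ∀ α ∈ Δ, α ∉ PointedCone.hull ℝ ((Δ : Set (Euc N)) \ {α})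

section PositiveRoots

variable {R : Finset (Euc N)} {v : Euc N} {Δ : Finset (Euc N)}

@[simp]
lemma mem_posRoots {β : Euc N} : β ∈ posRoots R v ↔ β ∈ R ∧ 0 < ⟪v, β⟫ :=
  Finset.mem_filter

lemma exists_isSimpleSystem (R : Finset (Euc N)) (v : Euc N) : ∃ Δ, IsSimpleSystem R v Δ := by
  classical
  obtain ⟨Δ, hΔ, hmin⟩ := ((posRoots R v).powerset.filter fun D : Finset (Euc N) =>
      ∀ β ∈ posRoots R v, β ∈ PointedCone.hull ℝ (D : Set (Euc N))).exists_min_image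
    Finset.card ⟨posRoots R v, Finset.mem_filter.2
      ⟨Finset.mem_powerset_self _, fun _ hβ => PointedCone.subset_hull hβ⟩⟩
  rw [Finset.mem_filter, Finset.mem_powerset] at hΔ
  refine ⟨Δ, hΔ.1, hΔ.2, fun α hα hαmem => ?_⟩
  have hle : PointedCone.hull ℝ (Δ : Set (Euc N)) ≤ PointedCone.hull ℝ (Δ.erase α) := by
    rw [Finset.coe_erase]
    refine Submodule.span_le.2 fun γ hγ => ?_
    by_cases hγα : γ = α
    · exact hγα ▸ hαmem
    · exact PointedCone.subset_hull ⟨hγ, hγα⟩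
  have := hmin (Δ.erase α) (Finset.mem_filter.2 ⟨Finset.mem_powerset.2
    ((Finset.erase_subset α Δ).trans hΔ.1), fun β hβ => hle (hΔ.2 β hβ)⟩)
  rw [Finset.card_erase_of_mem hα] at this
  have := Finset.card_pos.2 ⟨α, hα⟩
  omega

variable (hR : IsNormalizedRootSystem R) (hv : ∀ α ∈ R, ⟪v, α⟫ ≠ 0) (hΔ : IsSimpleSystem R v Δ)
include hR hv

lemma mem_posRoots_or_neg_mem_posRoots {β : Euc N} (hβ : β ∈ R) :
    β ∈ posRoots R v ∨ -β ∈ posRoots R v := by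
  rcases (hv β hβ).lt_or_gt with hneg | hpos
  · exact .inr (mem_posRoots.2 ⟨hR.neg_mem β hβ, by rwa [inner_neg_right, neg_pos]⟩)
  · exact .inl (mem_posRoots.2 ⟨hβ, hpos⟩)

include hΔ in
lemma IsSimpleSystem.sigmaRefl_mem_posRoots {α β : Euc N} (hα : α ∈ Δ)
    (hβ : β ∈ posRoots R v) (hβα : β ≠ α) : sigmaRefl α β ∈ posRoots R v := by
  obtain ⟨hαR, hαv⟩ := mem_posRoots.1 (hΔ.subset_posRoots hα)
  obtain ⟨hβR, hβv⟩ := mem_posRoots.1 hβ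
  have hσR := hR.refl_mem α hαR β hβR
  refine (mem_posRoots_or_neg_mem_posRoots hR hv hσR).resolve_right fun hδ => ?_
  -- If `-σ_α β = ⟪α, β⟫ α - β` is positive too, adding the expansions of the two gives
  -- `e • α = k₁ + k₂` with `kᵢ` in the cone of `Δ \ {α}`: `e > 0` contradicts the independence
  -- of `Δ`, and `e ≤ 0` forces `k₁ = 0`, so `β` is a multiple of `α`.
  set K := PointedCone.hull ℝ ((Δ : Set (Euc N)) \ {α})
  have hK : ∀ γ ∈ (Δ : Set (Euc N)) \ {α}, 0 < ⟪v, γ⟫ :=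
    fun γ hγ => (mem_posRoots.1 (hΔ.subset_posRoots hγ.1)).2
  obtain ⟨a, k₁, hk₁, hβ_eq⟩ := exists_eq_smul_add_of_mem_hull hα (hΔ.posRoots_subset_hull β hβ)
  obtain ⟨b, k₂, hk₂, hδ_eq⟩ := exists_eq_smul_add_of_mem_hull hα (hΔ.posRoots_subset_hull _ hδ)
  have hsum : (⟪α, β⟫ - a - b) • α = k₁ + k₂ := by
    rw [sigmaRefl_apply (hR.norm_eq α hαR)] at hδ_eq
    linear_combination (norm := module) hβ_eq + hδ_eq
  rcases lt_or_ge 0 (⟪α, β⟫ - a - b) with he | he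
  · exact hΔ.notMem_hull_diff α hα ((K.smul_mem_iff he).1 (hsum ▸ K.add_mem hk₁ hk₂))
  have hk₁v := inner_nonneg_of_mem_hull (fun γ hγ => (hK γ hγ).le) hk₁
  have hk₂v := inner_nonneg_of_mem_hull (fun γ hγ => (hK γ hγ).le) hk₂
  have hsumv := congrArg (⟪v, ·⟫) hsum
  simp only [inner_smul_right, inner_add_right] at hsumv
  rw [eq_zero_of_mem_hull_of_inner_eq_zero hK hk₁ (by nlinarith), add_zero] at hβ_eq
  rcases hR.smul_mem α hαR a (hβ_eq ▸ hβR) with h | h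
  · exact hβα (hβ_eq.trans h)
  · rw [← hβ_eq] at h
    rw [h, inner_neg_right] at hβv
    linarith

include hΔ in
lemma IsSimpleSystem.exists_sigmaRefl_mem_posRoots_lt {β : Euc N} (hβ : β ∈ posRoots R v)
    (hβΔ : β ∉ Δ) : ∃ γ ∈ Δ, sigmaRefl γ β ∈ posRoots R v ∧ ⟪v, sigmaRefl γ β⟫ < ⟪v, β⟫ := by
  have hβR := (mem_posRoots.1 hβ).1
  obtain ⟨γ, hγΔ, hβγ⟩ := exists_inner_pos_of_mem_hull (v := β) (hΔ.posRoots_subset_hull β hβ)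
    (by rw [real_inner_self_eq_norm_sq, hR.norm_eq β hβR]; norm_num)
  have hγ := mem_posRoots.1 (hΔ.subset_posRoots hγΔ)
  refine ⟨γ, hγΔ, hΔ.sigmaRefl_mem_posRoots hR hv hγΔ hβ (fun h => hβΔ (h ▸ hγΔ)), ?_⟩
  rw [sigmaRefl_apply (hR.norm_eq γ hγ.1), inner_sub_right, inner_smul_right,
    real_inner_comm β γ]
  nlinarith

include hΔ in
lemma IsSimpleSystem.exists_reflProd_eq_sigmaRefl {β : Euc N} (hβ : β ∈ R) :
    ∃ l : List (Euc N), (∀ γ ∈ l, γ ∈ Δ) ∧ reflProd l = sigmaRefl β := by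
  suffices H : ∀ β ∈ R, β ∈ posRoots R v →
      ∃ l : List (Euc N), (∀ γ ∈ l, γ ∈ Δ) ∧ reflProd l = sigmaRefl β by
    rcases mem_posRoots_or_neg_mem_posRoots hR hv hβ with hβ | hβ
    · exact H β (mem_posRoots.1 hβ).1 hβ
    · simpa [sigmaRefl_neg] using H _ (mem_posRoots.1 hβ).1 hβ
  have hwf : (R : Set (Euc N)).WellFoundedOn fun α β => ⟪v, α⟫ < ⟪v, β⟫ :=
    Set.wellFoundedOn_image.1 (R.finite_toSet.image _).wellFoundedOn
  intro β hβR
  apply hwf.induction hβR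
  intro β _ ih hβ
  by_cases hβΔ : β ∈ Δ
  · exact ⟨[β], by simpa using hβΔ, by simp⟩
  obtain ⟨γ, hγΔ, hβ', hlt⟩ := hΔ.exists_sigmaRefl_mem_posRoots_lt hR hv hβ hβΔ
  obtain ⟨l, hl, hprod⟩ := ih _ (mem_posRoots.1 hβ').1 hlt hβ'
  refine ⟨γ :: l ++ [γ], fun δ hδ => ?_, ?_⟩
  · simp only [List.cons_append, List.mem_cons, List.mem_append, List.not_mem_nil,
      or_false] at hδ
    rcases hδ with rfl | hδ | rfl
    exacts [hγΔ, hl δ hδ, hγΔ]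
  · rw [← sigmaRefl_sigmaRefl γ β, sigmaRefl_map (hR.norm_eq _ (mem_posRoots.1 hβ').1)]
    simp [hprod, mul_assoc]

include hΔ in
lemma IsSimpleSystem.exists_reflProd_eq {w : Euc N ≃ₗᵢ[ℝ] Euc N} (hw : w ∈ coxeterGroup R) :
    ∃ l : List (Euc N), (∀ γ ∈ l, γ ∈ Δ) ∧ reflProd l = w := by
  induction hw using Subgroup.closure_induction with
  | mem _ hσ =>
    obtain ⟨β, hβ, rfl⟩ := hσ
    exact hΔ.exists_reflProd_eq_sigmaRefl hR hv hβ
  | one => exact ⟨[], by simp, rfl⟩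
  | mul _ _ _ _ h₁ h₂ =>
    obtain ⟨l₁, hl₁, rfl⟩ := h₁
    obtain ⟨l₂, hl₂, rfl⟩ := h₂
    exact ⟨l₁ ++ l₂, fun γ hγ => (List.mem_append.1 hγ).elim (hl₁ γ) (hl₂ γ), reflProd_append _ _⟩
  | inv _ _ h =>
    obtain ⟨l, hl, rfl⟩ := h
    exact ⟨l.reverse, by simpa using hl, reflProd_reverse l⟩

include hΔ in
lemma IsSimpleSystem.exists_append_cons_of_reflProd_neg {l : List (Euc N)} (hl : ∀ γ ∈ l, γ ∈ Δ)
    {τ : Euc N} (hτ : τ ∈ posRoots R v) (hneg : ⟪v, reflProd l τ⟫ < 0) :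
    ∃ a γ b, l = a ++ γ :: b ∧ reflProd b τ = γ := by
  induction l using List.reverseRecOn generalizing τ with
  | nil => exact absurd hneg (not_lt.2 (mem_posRoots.1 hτ).2.le)
  | append_singleton l γ ih =>
    by_cases hτγ : τ = γ
    · exact ⟨l, γ, [], rfl, by simp [hτγ]⟩
    have hγ : γ ∈ Δ := hl γ (by simp)
    obtain ⟨a, δ, b, rfl, hb⟩ := ih (fun δ hδ => hl δ (by simp [hδ]))
      (hΔ.sigmaRefl_mem_posRoots hR hv hγ hτ hτγ) (by simpa using hneg)
    exact ⟨a, δ, b ++ [γ], by simp, by simpa using hb⟩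

include hΔ in
lemma IsSimpleSystem.exists_shorter_reflProd {l : List (Euc N)} (hl : ∀ γ ∈ l, γ ∈ Δ)
    {α : Euc N} (hα : α ∈ Δ) (hneg : ⟪v, reflProd l α⟫ < 0) :
    ∃ l₀ : List (Euc N), (∀ γ ∈ l₀, γ ∈ Δ) ∧ l₀.length < l.length ∧
      reflProd l₀ = reflProd l * sigmaRefl α := by
  obtain ⟨a, γ, b, rfl, hb⟩ :=
    hΔ.exists_append_cons_of_reflProd_neg hR hv hl (hΔ.subset_posRoots hα) hneg
  have hαR := (mem_posRoots.1 (hΔ.subset_posRoots hα)).1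
  refine ⟨a ++ b, fun δ hδ => hl δ (by simp at hδ ⊢; tauto), by simp, ?_⟩
  rw [← hb]
  simp [sigmaRefl_map (hR.norm_eq α hαR), mul_assoc]

include hΔ in
lemma IsSimpleSystem.inner_reflProd_le {x y : Euc N} (hx : ∀ β ∈ posRoots R v, 0 ≤ ⟪β, x⟫)
    (hy : ∀ β ∈ posRoots R v, 0 ≤ ⟪β, y⟫) {l : List (Euc N)} (hl : ∀ γ ∈ l, γ ∈ Δ) :
    ⟪x, reflProd l y⟫ ≤ ⟪x, y⟫ := by
  obtain ⟨n, hn⟩ : ∃ n, l.length = n := ⟨_, rfl⟩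
  induction n using Nat.strong_induction_on generalizing l with | _ n ih =>
  rcases l.eq_nil_or_concat' with rfl | ⟨l, α, rfl⟩
  · simp
  have hl' : ∀ γ ∈ l, γ ∈ Δ := fun γ hγ => hl γ (by simp [hγ])
  have hα := hΔ.subset_posRoots (hl α (by simp))
  have hlen : l.length < n := by simp [← hn]
  have hαl : reflProd l α ∈ R :=
    (hR.apply_mem_iff (reflProd_mem_coxeterGroup fun γ hγ =>
      (mem_posRoots.1 (hΔ.subset_posRoots (hl' γ hγ))).1) α).2 (mem_posRoots.1 hα).1
  rcases (hv _ hαl).lt_or_gt with hneg | hpos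
  · obtain ⟨l₀, hl₀, hlen₀, hprod⟩ := hΔ.exists_shorter_reflProd hR hv hl' (hl α (by simp)) hneg
    rw [reflProd_append, reflProd_singleton, ← hprod]
    exact ih _ (hlen₀.trans hlen) hl₀ rfl
  · calc ⟪x, reflProd (l ++ [α]) y⟫ = ⟪x, reflProd l y⟫ - ⟪α, y⟫ * ⟪reflProd l α, x⟫ := by
          rw [reflProd_append, reflProd_singleton, LinearIsometryEquiv.coe_mul,
            Function.comp_apply, sigmaRefl_apply (hR.norm_eq α (mem_posRoots.1 hα).1), map_sub,
            map_smul, inner_sub_right, inner_smul_right, real_inner_comm x]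
      _ ≤ ⟪x, reflProd l y⟫ :=
          sub_le_self _ (mul_nonneg (hy α hα) (hx _ (mem_posRoots.2 ⟨hαl, hpos⟩)))
      _ ≤ ⟪x, y⟫ := ih _ hlen hl' rfl

include hΔ in
lemma IsSimpleSystem.inner_apply_le {x y : Euc N} (hx : ∀ β ∈ posRoots R v, 0 ≤ ⟪β, x⟫)
    (hy : ∀ β ∈ posRoots R v, 0 ≤ ⟪β, y⟫) {w : Euc N ≃ₗᵢ[ℝ] Euc N} (hw : w ∈ coxeterGroup R) :
    ⟪x, w y⟫ ≤ ⟪x, y⟫ := by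
  obtain ⟨l, hl, rfl⟩ := hΔ.exists_reflProd_eq hR hv hw
  exact hΔ.inner_reflProd_le hR hv hx hy hl

end PositiveRoots

lemma IsNormalizedRootSystem.norm_sub_le_norm_sub_apply {R : Finset (Euc N)}
    (hR : IsNormalizedRootSystem R) {x y : Euc N} (hxy : ∀ α ∈ R, 0 ≤ ⟪α, x⟫ * ⟪α, y⟫)
    {w : Euc N ≃ₗᵢ[ℝ] Euc N} (hw : w ∈ coxeterGroup R) : ‖x - y‖ ≤ ‖x - w y‖ := by
  obtain ⟨v, hv⟩ := exists_forall_inner_ne_zero_and_nonneg R hR.ne_zero (x + y)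
  obtain ⟨Δ, hΔ⟩ := exists_isSimpleSystem R v
  have hdom : ∀ β ∈ posRoots R v, 0 ≤ ⟪β, x⟫ ∧ 0 ≤ ⟪β, y⟫ := by
    intro β hβ
    obtain ⟨hβR, hβv⟩ := mem_posRoots.1 hβ
    have hsum := (hv β hβR).2 hβv
    have hprod := hxy β hβR
    rw [inner_add_left, real_inner_comm β x, real_inner_comm β y] at hsum
    constructor <;> by_contra! <;> nlinarith
  have := hΔ.inner_apply_le hR (fun α hα => (hv α hα).1) (fun β hβ => (hdom β hβ).1)
    (fun β hβ => (hdom β hβ).2) hw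
  rw [← sq_le_sq₀ (norm_nonneg _) (norm_nonneg _), norm_sub_sq_real, norm_sub_sq_real, w.norm_map]
  linarith

lemma IsNormalizedRootSystem.exists_norm_sub_sigmaRefl_lt {R : Finset (Euc N)}
    (hR : IsNormalizedRootSystem R) {x y : Euc N} {w : Euc N ≃ₗᵢ[ℝ] Euc N}
    (hw : w ∈ coxeterGroup R) (h : ‖x - w y‖ < ‖x - y‖) :
    ∃ α ∈ R, ‖x - sigmaRefl α y‖ < ‖x - y‖ := by
  by_contra! H
  refine h.not_ge (hR.norm_sub_le_norm_sub_apply (fun α hα => not_lt.1 fun hneg => ?_) hw)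
  exact (H α hα).not_gt ((norm_sub_sigmaRefl_lt_iff (hR.norm_eq α hα) x y).2 hneg)

lemma chainPt_cons_succ (α : Euc N) (a : ℕ → Euc N) (y : Euc N) (j : ℕ) :
    chainPt (Stream'.cons α a) y (j + 1) = chainPt a (sigmaRefl α y) j := by
  induction j with
  | zero => rfl
  | succ j ih => exact congrArg (sigmaRefl (a j)) ih

lemma IsNormalizedRootSystem.exists_chain {R : Finset (Euc N)} (hR : IsNormalizedRootSystem R)
    [Finite (coxeterGroup R)] (x y : Euc N) {τ : Euc N ≃ₗᵢ[ℝ] Euc N} (hτ : τ ∈ coxeterGroup R) :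
    ∃ m ≤ {σ : coxeterGroup R | ‖x - (σ : Euc N ≃ₗᵢ[ℝ] Euc N) y‖ < ‖x - τ y‖}.ncard,
      ∃ a : ℕ → Euc N, (∀ j < m, a j ∈ R) ∧
        (∀ j < m, ‖x - chainPt a (τ y) (j + 1)‖ < ‖x - chainPt a (τ y) j‖) ∧
        ‖x - chainPt a (τ y) m‖ = orbDist (coxeterGroup R) x y := by
  obtain ⟨n, hn⟩ : ∃ n,
      {σ : coxeterGroup R | ‖x - (σ : Euc N ≃ₗᵢ[ℝ] Euc N) y‖ < ‖x - τ y‖}.ncard = n := ⟨_, rfl⟩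
  induction n using Nat.strong_induction_on generalizing τ with | _ n ih =>
  rcases (orbDist_le hτ x y).eq_or_lt with heq | hlt
  · exact ⟨0, Nat.zero_le _, fun _ => 0, by simp, by simp, heq.symm⟩
  obtain ⟨σ₀, hσ₀, hσ₀y⟩ := exists_mem_norm_sub_eq_orbDist (coxeterGroup R) x y
  obtain ⟨α, hα, hdec⟩ := hR.exists_norm_sub_sigmaRefl_lt (x := x) (y := τ y)
    (mul_mem hσ₀ (inv_mem hτ)) (by simpa [hσ₀y] using hlt)
  have hατ : sigmaRefl α * τ ∈ coxeterGroup R := mul_mem (sigmaRefl_mem_coxeterGroup hα) hτ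
  have hcard : {σ : coxeterGroup R |
      ‖x - (σ : Euc N ≃ₗᵢ[ℝ] Euc N) y‖ < ‖x - (sigmaRefl α * τ) y‖}.ncard < n :=
    hn ▸ Set.ncard_lt_ncard ⟨fun σ hσ => lt_trans hσ hdec, fun hsub =>
      (Set.mem_ofPred.1 (hsub (show (⟨_, hατ⟩ : coxeterGroup R) ∈ _ from hdec))).false⟩
  obtain ⟨m, hm, a, ha, hchain, hfin⟩ := ih _ hcard hατ rfl
  refine ⟨m + 1, by omega, Stream'.cons α a, Nat.forall_lt_succ_left.2 ⟨hα, ha⟩,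
    Nat.forall_lt_succ_left.2 ⟨hdec, fun j hj => ?_⟩, ?_⟩
  · rw [chainPt_cons_succ, chainPt_cons_succ]
    exact hchain j hj
  · rw [chainPt_cons_succ]
    exact hfin

/-- existence of a strictly distance-decreasing chain of at most `|G|`
reflections bringing `y` to distance `d(x,y)` from `x`. -/
theorem exists_decreasing_reflection_chain {N : ℕ} (R : Finset (Euc N))
    (hR : IsNormalizedRootSystem R) (hG : Finite (coxeterGroup R)) (x y : Euc N)
    (h : orbDist (coxeterGroup R) x y < ‖x - y‖) :
    ∃ m : ℕ, 1 ≤ m ∧ m ≤ Nat.card (coxeterGroup R) ∧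
      ∃ a : ℕ → Euc N, (∀ j < m, a j ∈ R) ∧
        (∀ j < m, ‖x - chainPt a y (j + 1)‖ < ‖x - chainPt a y j‖) ∧
        ‖x - chainPt a y m‖ = orbDist (coxeterGroup R) x y := by
  obtain ⟨m, hm, a, ha, hchain, hfin⟩ := hR.exists_chain x y (one_mem (coxeterGroup R))
  refine ⟨m, Nat.one_le_iff_ne_zero.2 ?_, hm.trans (Set.ncard_le_card _), a, ha, hchain, hfin⟩
  rintro rfl
  exact h.ne hfin.symm
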